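/- Let U be a set of paths in ℝ^d that is closed under concatenation: X ⊔ Y ∈ U for all X, Y ∈ U. Then the Zariski closure 𝒱(ℐ(U)) of U is closed under concatenation: if X, Y ∈ 𝒱(ℐ(U)) then X ⊔ Y ∈ 𝒱(ℐ(U)). -/

import Mathlib

open scoped BigOperators TensorProduct

namespace PathVarieties

/-- Words over an alphabet `α`; the letters `{1,…,d}` of `ℝ^d` correspond to `α = Fin d`. -/
abbrev Word (α : Type*) := List α

/-- The tensor algebra `T(ℝ^d)`, identified with the free real vector space on words. -/
abbrev TA (α : Type*) := Word α →₀ ℝ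

/-- The list of all (riffle) shuffles of two words. -/
def shuffles {α : Type*} : Word α → Word α → List (Word α)
  | [], v => [v]
  | a :: u, [] => [a :: u]
  | a :: u, b :: v =>
      ((shuffles u (b :: v)).map (a :: ·)) ++ ((shuffles (a :: u) v).map (b :: ·))
termination_by u v => u.length + v.length
decreasing_by all_goals (simp only [List.length_cons]; omega)

/-- Shuffle product of two words, as an element of `T(ℝ^d)`. -/
noncomputable def shw {α : Type*} (u v : Word α) : TA α :=
  ((shuffles u v).map fun w => Finsupp.single w (1 : ℝ)).sum

/-- The shuffle product `⧢` on `T(ℝ^d)`, the bilinear extension of the shuffle of words. -/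
noncomputable def sh {α : Type*} (x y : TA α) : TA α :=
  x.sum fun u cu => y.sum fun v cv => (cu * cv) • shw u v

/-- Right halfshuffle `u ≻ v` of words (`v` nonempty): shuffle `u` with `v` minus its
last letter, then append the last letter of `v`.  (This is the unique bilinear operation
with `w ≻ a = wa` and `w ≻ (va) = (w≻v + v≻w)a`.) -/
noncomputable def rshw {α : Type*} (u v : Word α) : TA α :=
  ((shuffles u v.dropLast).map fun w =>
    Finsupp.single (w ++ v.drop (v.length - 1)) (1 : ℝ)).sum

/-- Right halfshuffle `≻` on `T^{≥1}(ℝ^d)`, extended bilinearly. -/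
noncomputable def rsh {α : Type*} (x y : TA α) : TA α :=
  x.sum fun u cu => y.sum fun v cv => (cu * cv) • rshw u v

/-- Left halfshuffle `u ≺ v` of words (`u` nonempty): the first letter of `u` followed by
the shuffle of the rest of `u` with `v`.  (This is the unique bilinear operation with
`a ≺ w = aw` and `(av) ≺ w = a(w≺v + v≺w)`.) -/
noncomputable def lshw {α : Type*} (u v : Word α) : TA α :=
  ((shuffles u.tail v).map fun w => Finsupp.single (u.take 1 ++ w) (1 : ℝ)).sum

/-- Left halfshuffle `≺` on `T^{≥1}(ℝ^d)`, extended bilinearly. -/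
noncomputable def lsh {α : Type*} (x y : TA α) : TA α :=
  x.sum fun u cu => y.sum fun v cv => (cu * cv) • lshw u v

/-- The antipode `𝒜`, with `𝒜(i₁⋯iₙ) = (−1)ⁿ iₙ⋯i₁`. -/
noncomputable def antipode {α : Type*} (x : TA α) : TA α :=
  x.sum fun w c => Finsupp.single w.reverse (((-1 : ℝ) ^ w.length) * c)

/-- Helper for `Λ_B`: value on a reversed word. -/
noncomputable def lamRev {α β : Type*} (B : α → TA β) : Word α → TA β
  | [] => Finsupp.single [] 1
  | [i] => B i
  | i :: w => rsh (lamRev B w) (B i)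

/-- `Λ_B` on a word: `Λ_B e = e`, `Λ_B i = B i`, `Λ_B (w·i) = (Λ_B w) ≻ (Λ_B i)`. -/
noncomputable def lamW {α β : Type*} (B : α → TA β) (w : Word α) : TA β :=
  lamRev B w.reverse

/-- The linear map `Λ_B : T(ℝ^t) → T(ℝ^d)` induced by `B` on letters. -/
noncomputable def Lam {α β : Type*} (B : α → TA β) (x : TA α) : TA β :=
  x.sum fun w c => c • lamW B w

/-- `splitEmb e j n w = Σ_{w = u₁⋯uₙ} e_j(u₁) ⧢ e_{j+1}(u₂) ⧢ ⋯ ⧢ e_{j+n−1}(uₙ)`,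
the sum over all splittings of `w` into `n` consecutive (possibly empty) factors,
each factor relabelled letterwise by `e`. -/
noncomputable def splitEmb {α β : Type*} (e : ℕ → α → β) : ℕ → ℕ → Word α → TA β
  | _, 0, w => if w.isEmpty then Finsupp.single ([] : Word β) (1 : ℝ) else 0
  | j, k + 1, w => ∑ m ∈ Finset.range (w.length + 1),
      sh (Finsupp.single ((w.take m).map (e j)) (1 : ℝ)) (splitEmb e (j + 1) k (w.drop m))

/-- `Σ_{x=uv} f(u)·v`: deconcatenate, evaluate the functional `f` on prefixes. -/
noncomputable def leftAct {α : Type*} (f : Word α → ℝ) (x : TA α) : TA α :=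
  x.sum fun w c => c • ∑ k ∈ Finset.range (w.length + 1),
    f (w.take k) • Finsupp.single (w.drop k) (1 : ℝ)

/-- `Σ_{x=uv} u·f(v)`: deconcatenate, evaluate the functional `f` on suffixes. -/
noncomputable def rightAct {α : Type*} (f : Word α → ℝ) (x : TA α) : TA α :=
  x.sum fun w c => c • ∑ k ∈ Finset.range (w.length + 1),
    f (w.drop k) • Finsupp.single (w.take k) (1 : ℝ)

/-- A raw path: a time horizon `T` together with a map `ℝ → ℝ^α`
(only the restriction to `[0,T]` is relevant). -/
structure RawPath (α : Type*) where
  T : ℝ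
  toFun : ℝ → α → ℝ

/-- A path: positive time horizon, continuous on `[0,T]` and piecewise continuously
differentiable there (witnessed by a partition `0 = τ₀ < τ₁ < ⋯ < τₙ = T`). -/
def IsPath {α : Type*} (X : RawPath α) : Prop :=
  0 < X.T ∧ (∀ i, ContinuousOn (fun t => X.toFun t i) (Set.Icc 0 X.T)) ∧
    ∃ (n : ℕ) (τ : Fin (n + 1) → ℝ), StrictMono τ ∧ τ 0 = 0 ∧ τ (Fin.last n) = X.T ∧
      ∀ (k : Fin n) (i : α), ContDiffOn ℝ 1 (fun t => X.toFun t i)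
        (Set.Icc (τ k.castSucc) (τ k.succ))

/-- Iterated integrals, by recursion on the reversed word:
`sigRev X (i :: w) t = ∫₀ᵗ ⟨σ(X)ₛ, w.reverse⟩ dX⁽ⁱ⁾(s)`. -/
noncomputable def sigRev {α : Type*} (X : ℝ → α → ℝ) : Word α → ℝ → ℝ
  | [], _ => 1
  | i :: w, t => ∫ s in (0 : ℝ)..t, sigRev X w s * deriv (fun u => X u i) s

/-- `⟨σ(X)_t, w⟩`, the iterated-integrals signature of `X` stopped at time `t`. -/
noncomputable def sigUpTo {α : Type*} (X : RawPath α) (t : ℝ) (w : Word α) : ℝ :=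
  sigRev X.toFun w.reverse t

/-- `⟨σ(X), w⟩`, the iterated-integrals signature of the path `X` at a word `w`. -/
noncomputable def sig {α : Type*} (X : RawPath α) (w : Word α) : ℝ :=
  sigUpTo X X.T w

/-- Pairing of a word-indexed functional with an element of `T(ℝ^d)`. -/
noncomputable def pairF {α : Type*} (f : Word α → ℝ) (x : TA α) : ℝ :=
  x.sum fun w c => c * f w

/-- `⟨σ(X), x⟩` for a tensor `x ∈ T(ℝ^d)` (linear in `x`). -/
noncomputable def pair {α : Type*} (X : RawPath α) (x : TA α) : ℝ :=
  Finsupp.linearCombination ℝ (sig X) x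

/-- The path variety `𝒱(W)` of all paths whose signature kills every element of `W`. -/
def V {α : Type*} (W : Set (TA α)) : Set (RawPath α) :=
  {X | IsPath X ∧ ∀ x ∈ W, pair X x = 0}

/-- `ℐ(M)`, the space of tensors killed by the signature of every path in `M`. -/
noncomputable def Idl {α : Type*} (M : Set (RawPath α)) : Submodule ℝ (TA α) :=
  ⨅ X ∈ M, LinearMap.ker (Finsupp.linearCombination ℝ (sig X))

/-- Concatenation `X ⊔ Y` of paths. -/
noncomputable def concat {α : Type*} (X Y : RawPath α) : RawPath α where
  T := X.T + Y.T
  toFun := fun t i =>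
    if t ≤ X.T then X.toFun t i else Y.toFun (t - X.T) i + X.toFun X.T i - Y.toFun 0 i

/-- Time reversal `⟵X`. -/
def timeRev {α : Type*} (X : RawPath α) : RawPath α :=
  ⟨X.T, fun t i => X.toFun (X.T - t) i⟩

/-- `concatIter X n = X^{⊔(n+1)}`. -/
noncomputable def concatIter {α : Type*} (X : RawPath α) : ℕ → RawPath α
  | 0 => X
  | n + 1 => concat (concatIter X n) X

/-- `X^{⊔n}`, the `n`-fold concatenation of `X` with itself (intended for `n ≥ 1`). -/
noncomputable def concatPow {α : Type*} (X : RawPath α) (n : ℕ) : RawPath α :=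
  concatIter X (n - 1)

/-- `concatFold f k = f 0 ⊔ f 1 ⊔ ⋯ ⊔ f k`. -/
noncomputable def concatFold {α : Type*} (f : ℕ → RawPath α) : ℕ → RawPath α
  | 0 => f 0
  | k + 1 => concat (concatFold f k) (f (k + 1))

/-- The deconcatenation coproduct `Δ : T(ℝ^d) → T(ℝ^d) ⊗ T(ℝ^d)`,
`Δw = Σ_{w=uv} u ⊗ v`. -/
noncomputable def deconc {α : Type*} (x : TA α) : TensorProduct ℝ (TA α) (TA α) :=
  x.sum fun w c => c • ∑ k ∈ Finset.range (w.length + 1),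
    (Finsupp.single (w.take k) (1 : ℝ)) ⊗ₜ[ℝ] (Finsupp.single (w.drop k) (1 : ℝ))

/-!
By Chen's identity `⟨σ(X ⊔ Y), w⟩ = ∑_{w = uv} ⟨σ(X), u⟩ ⟨σ(Y), v⟩`, pairing with the
signature of a concatenation factors through linear maps on tensors:
`⟨σ(X ⊔ Y), x⟩ = ⟨σ(X), R_Y x⟩ = ⟨σ(Y), L_X x⟩`, where `R_Y = rightAct (sig Y)` and
`L_X = leftAct (sig X)`. For `B ∈ U`, closedness of `U` under concatenation makes `R_B` map
`ℐ(U)` into itself, so `X ⊔ B` stays in `𝒱(ℐ(U))` for `X ∈ 𝒱(ℐ(U))`. That in turn makes `L_X`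
map `ℐ(U)` into itself, so `X ⊔ Y` is in `𝒱(ℐ(U))` for every `Y ∈ 𝒱(ℐ(U))`.
-/

open MeasureTheory Set

section Partition

variable {α : Type*}

-- A strict chain `p : LTSeries ℝ` serves as the partition `p 0 < p 1 < ⋯ < p.last`.
def ContDiffOnPieces (p : LTSeries ℝ) (f : ℝ → α → ℝ) : Prop :=
  ∀ (k : Fin p.length) (i : α), ContDiffOn ℝ 1 (fun t => f t i) (Icc (p k.castSucc) (p k.succ))

lemma isPath_iff {X : RawPath α} :
    IsPath X ↔ 0 < X.T ∧ (∀ i, ContinuousOn (fun t => X.toFun t i) (Icc 0 X.T)) ∧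
      ∃ p : LTSeries ℝ, p.head = 0 ∧ p.last = X.T ∧ ContDiffOnPieces p X.toFun := by
  refine and_congr_right fun _ => and_congr_right fun _ => ⟨?_, ?_⟩
  · rintro ⟨n, τ, hτ, h0, hT, hC⟩
    exact ⟨LTSeries.mk n τ hτ, h0, hT, hC⟩
  · rintro ⟨p, h0, hT, hC⟩
    exact ⟨p.length, p, p.strictMono, h0, hT, hC⟩

namespace ContDiffOnPieces

variable {p q : LTSeries ℝ} {f g : ℝ → α → ℝ}

lemma congr (hf : ContDiffOnPieces p f) (hfg : ∀ t ∈ Icc p.head p.last, ∀ i, f t i = g t i) :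
    ContDiffOnPieces p g := fun k i =>
  (hf k i).congr fun t ht =>
    (hfg t ⟨(p.head_le _).trans ht.1, ht.2.trans (p.monotone (Fin.le_last _))⟩ i).symm

lemma smash (hp : ContDiffOnPieces p f) (hq : ContDiffOnPieces q f) (h : p.last = q.head) :
    ContDiffOnPieces (p.smash q h) f := by
  intro k i
  induction k using Fin.addCases with
  | left k =>
    have := hp k i
    rwa [← RelSeries.smash_castAdd h, ← RelSeries.smash_succ_castAdd h] at this
  | right k =>
    have := hq k i
    rwa [← RelSeries.smash_natAdd h, ← RelSeries.smash_succ_natAdd h] at this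

lemma translate (hp : ContDiffOnPieces p f) (c : ℝ) (e : α → ℝ) :
    ContDiffOnPieces (p.map (c + ·) add_right_strictMono) (fun t i => f (t - c) i + e i) :=
  fun k i => ((hp k i).comp (contDiff_id.sub contDiff_const).contDiffOn fun _ ht =>
    ⟨le_sub_iff_add_le'.2 ht.1, sub_le_iff_le_add'.2 ht.2⟩).add contDiffOn_const

end ContDiffOnPieces

end Partition

section Concat

variable {α : Type*} {X Y : RawPath α}

lemma concat_toFun_of_le {t : ℝ} (h : t ≤ X.T) (i : α) :
    (concat X Y).toFun t i = X.toFun t i := if_pos h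

lemma concat_toFun_of_ge {t : ℝ} (h : X.T ≤ t) (i : α) :
    (concat X Y).toFun t i = Y.toFun (t - X.T) i + (X.toFun X.T i - Y.toFun 0 i) := by
  rcases h.eq_or_lt with rfl | h
  · simp [concat]
  · simp [concat, not_le.2 h, add_sub_assoc]

lemma IsPath.concat (hX : IsPath X) (hY : IsPath Y) : IsPath (PathVarieties.concat X Y) := by
  obtain ⟨hX0, hXc, p, hp0, hpT, hp⟩ := isPath_iff.1 hX
  obtain ⟨hY0, hYc, q, hq0, hqT, hq⟩ := isPath_iff.1 hY
  let q' := q.map (X.T + ·) add_right_strictMono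
  have hpq : p.last = q'.head := by simp [q', hpT, hq0]
  refine isPath_iff.2 ⟨add_pos hX0 hY0, fun i => ?_, p.smash q' hpq, by simp [hp0],
    by simp [q', hqT]; rfl, ?_⟩
  · have hright : ContinuousOn (fun t => (PathVarieties.concat X Y).toFun t i)
        (Icc X.T (X.T + Y.T)) := by
      refine (((hYc i).comp (continuous_sub_right X.T).continuousOn fun t ht =>
        ⟨sub_nonneg.2 ht.1, sub_le_iff_le_add'.2 ht.2⟩).add
        (continuousOn_const (c := X.toFun X.T i - Y.toFun 0 i))).congr fun t ht => ?_
      exact concat_toFun_of_ge ht.1 i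
    rw [show (PathVarieties.concat X Y).T = X.T + Y.T from rfl,
      ← Icc_union_Icc_eq_Icc hX0.le (le_add_of_nonneg_right hY0.le)]
    exact ((hXc i).congr fun t ht => concat_toFun_of_le ht.2 i).union_of_isClosed hright
      isClosed_Icc isClosed_Icc
  · refine (hp.congr ?_).smash
      ((hq.translate X.T fun i => X.toFun X.T i - Y.toFun 0 i).congr ?_) hpq
    · intro t ht i
      exact (concat_toFun_of_le (ht.2.trans hpT.le) i).symm
    · intro t ht i
      refine (concat_toFun_of_ge ?_ i).symm
      simpa [q', hq0] using ht.1

end Concat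

section Integrability

variable {α : Type*}

lemma ContDiffOn.intervalIntegrable_deriv {f : ℝ → ℝ} {a b : ℝ} (hab : a < b)
    (hf : ContDiffOn ℝ 1 f (Icc a b)) : IntervalIntegrable (deriv f) volume a b := by
  rw [intervalIntegrable_iff_integrableOn_Ioo_of_le hab.le]
  refine (((hf.continuousOn_derivWithin (uniqueDiffOn_Icc hab) le_rfl).integrableOn_Icc).mono_set
    Ioo_subset_Icc_self).congr_fun (fun t ht => ?_) measurableSet_Ioo
  exact derivWithin_of_mem_nhds (Icc_mem_nhds ht.1 ht.2)

lemma ContDiffOnPieces.intervalIntegrable_deriv {p : LTSeries ℝ} {f : ℝ → α → ℝ}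
    (hf : ContDiffOnPieces p f) (i : α) :
    IntervalIntegrable (deriv fun t => f t i) volume p.head p.last := by
  suffices h : ∀ j, IntervalIntegrable (deriv fun t => f t i) volume (p 0) (p j) from h _
  intro j
  induction j using Fin.induction with
  | zero => exact IntervalIntegrable.refl
  | succ j ih =>
    exact ih.trans <|
      ContDiffOn.intervalIntegrable_deriv (p.strictMono Fin.castSucc_lt_succ) (hf j i)

lemma IsPath.intervalIntegrable_deriv {X : RawPath α} (hX : IsPath X) (i : α) :
    IntervalIntegrable (deriv fun t => X.toFun t i) volume 0 X.T := by
  obtain ⟨-, -, p, hp0, hpT, hp⟩ := isPath_iff.1 hX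
  simpa [hp0, hpT] using hp.intervalIntegrable_deriv i

end Integrability

section IteratedIntegrals

variable {α : Type*}

lemma sigRev_nil (Xf : ℝ → α → ℝ) (t : ℝ) : sigRev Xf ([] : Word α) t = 1 := rfl

lemma sigRev_cons (Xf : ℝ → α → ℝ) (i : α) (w : Word α) (t : ℝ) :
    sigRev Xf (i :: w) t = ∫ s in (0 : ℝ)..t, sigRev Xf w s * deriv (fun u => Xf u i) s := rfl

lemma continuousOn_sigRev {Xf : ℝ → α → ℝ} {T : ℝ} (hT : 0 ≤ T)
    (hXf : ∀ i, IntervalIntegrable (deriv fun t => Xf t i) volume 0 T) (w : Word α) :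
    ContinuousOn (sigRev Xf w) (Icc 0 T) := by
  induction w with
  | nil => exact continuousOn_const
  | cons i w ih =>
    have h := intervalIntegral.continuousOn_primitive_interval'
      ((hXf i).continuousOn_mul (by rwa [uIcc_of_le hT])) left_mem_uIcc
    rwa [uIcc_of_le hT] at h

lemma IsPath.intervalIntegrable_sigRev_mul_deriv {X : RawPath α} (hX : IsPath X) (w : Word α)
    (i : α) {a b : ℝ} (ha : a ∈ Icc 0 X.T) (hb : b ∈ Icc 0 X.T) :
    IntervalIntegrable (fun s => sigRev X.toFun w s * deriv (fun u => X.toFun u i) s)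
      volume a b := by
  have hT := hX.1.le
  refine ((hX.intervalIntegrable_deriv i).continuousOn_mul ?_).mono_set ?_
  · rw [uIcc_of_le hT]
    exact continuousOn_sigRev hT hX.intervalIntegrable_deriv w
  · rw [uIcc_of_le hT]
    exact uIcc_subset_Icc ha hb

end IteratedIntegrals

section Chen

variable {α : Type*} {X Y : RawPath α}

lemma deriv_concat_of_lt {t : ℝ} (h : t < X.T) (i : α) :
    deriv (fun u => (concat X Y).toFun u i) t = deriv (fun u => X.toFun u i) t :=
  Filter.EventuallyEq.deriv_eq <|
    Filter.eventually_of_mem (Iio_mem_nhds h) fun _ hu => concat_toFun_of_le (le_of_lt hu) i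

lemma deriv_concat_of_gt {t : ℝ} (h : X.T < t) (i : α) :
    deriv (fun u => (concat X Y).toFun u i) t = deriv (fun u => Y.toFun u i) (t - X.T) := by
  rw [Filter.EventuallyEq.deriv_eq (Filter.eventually_of_mem (Ioi_mem_nhds h) fun _ hu =>
    concat_toFun_of_ge (le_of_lt hu) i), deriv_add_const]
  exact deriv_comp_sub_const (f := fun u => Y.toFun u i) X.T t

lemma sigRev_concat_of_mem_Icc (w : Word α) {s : ℝ} (hs : s ∈ Icc 0 X.T) :
    sigRev (concat X Y).toFun w s = sigRev X.toFun w s := by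
  induction w generalizing s with
  | nil => rfl
  | cons i w ih =>
    refine intervalIntegral.integral_congr_ae <|
      (Measure.ae_ne volume X.T).mono fun u hu hmem => ?_
    rw [uIoc_of_le hs.1] at hmem
    have hu' : u < X.T := lt_of_le_of_ne (hmem.2.trans hs.2) hu
    rw [ih ⟨hmem.1.le, hu'.le⟩, deriv_concat_of_lt hu']

lemma sigRev_concat_eq_sum (hX : IsPath X) (hY : IsPath Y) (w : Word α) {t : ℝ}
    (ht : t ∈ Icc X.T (X.T + Y.T)) :
    sigRev (concat X Y).toFun w t = ∑ k ∈ Finset.range (w.length + 1),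
      sigRev Y.toFun (w.take k) (t - X.T) * sigRev X.toFun (w.drop k) X.T := by
  induction w generalizing t with
  | nil => simp [sigRev_nil]
  | cons i w ih =>
    have hZ := hX.concat hY
    have hXT : X.T ∈ Icc 0 (concat X Y).T := ⟨hX.1.le, le_add_of_nonneg_right hY.1.le⟩
    have htY : t - X.T ∈ Icc 0 Y.T := ⟨sub_nonneg.2 ht.1, sub_le_iff_le_add'.2 ht.2⟩
    have hsplit := intervalIntegral.integral_add_adjacent_intervals
      (hZ.intervalIntegrable_sigRev_mul_deriv w i (left_mem_Icc.2 hZ.1.le) hXT)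
      (hZ.intervalIntegrable_sigRev_mul_deriv w i hXT ⟨hX.1.le.trans ht.1, ht.2⟩)
    have hright : ∫ s in X.T..t, sigRev (concat X Y).toFun w s *
        deriv (fun u => (concat X Y).toFun u i) s = ∑ k ∈ Finset.range (w.length + 1),
          sigRev Y.toFun (i :: w.take k) (t - X.T) * sigRev X.toFun (w.drop k) X.T := by
      calc _ = ∫ s in X.T..t, ∑ k ∈ Finset.range (w.length + 1),
              sigRev Y.toFun (w.take k) (s - X.T) * deriv (fun u => Y.toFun u i) (s - X.T) *
                sigRev X.toFun (w.drop k) X.T := by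
            refine intervalIntegral.integral_congr_ae (Filter.Eventually.of_forall fun s hs => ?_)
            rw [uIoc_of_le ht.1] at hs
            rw [ih ⟨hs.1.le, hs.2.trans ht.2⟩, deriv_concat_of_gt hs.1, Finset.sum_mul]
            exact Finset.sum_congr rfl fun k _ => by ring
        _ = _ := by
            rw [intervalIntegral.integral_comp_sub_right
              (fun s => ∑ k ∈ Finset.range (w.length + 1),
                sigRev Y.toFun (w.take k) s * deriv (fun u => Y.toFun u i) s *
                  sigRev X.toFun (w.drop k) X.T), sub_self, intervalIntegral.integral_finsetSum]
            · simp only [intervalIntegral.integral_mul_const, sigRev_cons]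
            · exact fun k _ => (hY.intervalIntegrable_sigRev_mul_deriv _ i
                (left_mem_Icc.2 hY.1.le) htY).mul_const _
    rw [sigRev_cons, ← hsplit, ← sigRev_cons, sigRev_concat_of_mem_Icc _ ⟨hX.1.le, le_rfl⟩,
      hright, List.length_cons, Finset.sum_range_succ' _ (w.length + 1)]
    simp only [List.take_succ_cons, List.drop_succ_cons, List.take_zero, List.drop_zero,
      sigRev_nil, one_mul]
    exact add_comm _ _

theorem sig_concat (hX : IsPath X) (hY : IsPath Y) (w : Word α) :
    sig (concat X Y) w = ∑ k ∈ Finset.range (w.length + 1),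
      sig X (w.take k) * sig Y (w.drop k) := by
  have h := sigRev_concat_eq_sum hX hY w.reverse
    ⟨le_add_of_nonneg_right hY.1.le, le_rfl⟩
  rw [add_sub_cancel_left, List.length_reverse] at h
  -- `sigRev` reads words backwards: prefixes of `w.reverse` are reversed suffixes of `w`.
  have hterm : ∀ k,
      sigRev Y.toFun (w.reverse.take k) Y.T * sigRev X.toFun (w.reverse.drop k) X.T =
        sig X (w.take (w.length - k)) * sig Y (w.drop (w.length - k)) := by
    intro k
    rw [List.take_reverse, List.drop_reverse, mul_comm]
    rfl
  rw [sig, sigUpTo, show (concat X Y).T = X.T + Y.T from rfl, h,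
    Finset.sum_congr rfl fun k _ => hterm k]
  simpa using Finset.sum_range_reflect (fun k => sig X (w.take k) * sig Y (w.drop k))
    (w.length + 1)

end Chen

section Duality

variable {α : Type*} {M : Set (RawPath α)} {X Y : RawPath α} {x : TA α}

lemma mem_Idl_iff : x ∈ Idl M ↔ ∀ Z ∈ M, pair Z x = 0 := by
  simp only [Idl, Submodule.mem_iInf, LinearMap.mem_ker]
  rfl

lemma pair_concat_eq_pair_rightAct (hX : IsPath X) (hY : IsPath Y) :
    pair (concat X Y) x = pair X (rightAct (sig Y) x) := by
  simp [pair, rightAct, Finsupp.linearCombination_apply, map_finsuppSum, sig_concat hX hY,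
    Finset.mul_sum, mul_comm]

lemma pair_concat_eq_pair_leftAct (hX : IsPath X) (hY : IsPath Y) :
    pair (concat X Y) x = pair Y (leftAct (sig X) x) := by
  simp [pair, leftAct, Finsupp.linearCombination_apply, map_finsuppSum, sig_concat hX hY,
    Finset.mul_sum, mul_comm]

lemma rightAct_sig_mem_Idl (hM : ∀ Z ∈ M, IsPath Z) (hY : IsPath Y)
    (h : ∀ Z ∈ M, pair (concat Z Y) x = 0) : rightAct (sig Y) x ∈ Idl M :=
  mem_Idl_iff.2 fun Z hZ => pair_concat_eq_pair_rightAct (hM Z hZ) hY ▸ h Z hZ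

lemma leftAct_sig_mem_Idl (hM : ∀ Z ∈ M, IsPath Z) (hX : IsPath X)
    (h : ∀ Z ∈ M, pair (concat X Z) x = 0) : leftAct (sig X) x ∈ Idl M :=
  mem_Idl_iff.2 fun Z hZ => pair_concat_eq_pair_leftAct hX (hM Z hZ) ▸ h Z hZ

end Duality

/-- If a set `U` of paths is closed under concatenation, then its
Zariski closure `𝒱(ℐ(U))` is closed under concatenation. -/
theorem statement17 {d : ℕ} (U : Set (RawPath (Fin d)))
    (hpath : ∀ X ∈ U, IsPath X)
    (hconc : ∀ X ∈ U, ∀ Y ∈ U, concat X Y ∈ U) :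
    ∀ X Y : RawPath (Fin d),
      X ∈ V (Idl U : Set (TA (Fin d))) → Y ∈ V (Idl U : Set (TA (Fin d))) →
        concat X Y ∈ V (Idl U : Set (TA (Fin d))) := by
  rintro X Y ⟨hX, hXU⟩ ⟨hY, hYU⟩
  have hXB : ∀ B ∈ U, ∀ x ∈ Idl U, pair (concat X B) x = 0 := fun B hB x hx => by
    rw [pair_concat_eq_pair_rightAct hX (hpath B hB)]
    exact hXU _ <| rightAct_sig_mem_Idl hpath (hpath B hB) fun Z hZ =>
      mem_Idl_iff.1 hx _ (hconc Z hZ B hB)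
  refine ⟨hX.concat hY, fun x hx => ?_⟩
  rw [pair_concat_eq_pair_leftAct hX hY]
  exact hYU _ <| leftAct_sig_mem_Idl hpath hX fun Z hZ => hXB Z hZ x hx

end PathVarieties
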